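/- Let L be a relational first-order language and let U be a countably infinite ultrahomogeneous L-structure with the pigeonhole property. Let a₁, …, aₙ, b be distinct elements of U and let g be a partial isomorphism with domain {a₁, …, aₙ}. Then the set S = {x ∈ U : x ∉ range(g) and the map extending g by b ↦ x is a partial isomorphism}, equipped with the induced L-structure, is isomorphic to U; in particular S is infinite. -/

import Mathlib

open FirstOrder

/-- `U` has the pigeonhole property: for every subset `S`, the induced structure on `S`
or on its complement is isomorphic to `U`; for a relational language this is expressed
by the existence of a self-embedding with range `S` (resp. `Sᶜ`). -/
def HasPigeonhole (L : Language) (U : Type*) [L.Structure U] : Prop :=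
  ∀ S : Set U, (∃ f : U ↪[L] U, Set.range f = S) ∨ (∃ f : U ↪[L] U, Set.range f = Sᶜ)

/-- `f` is a partial isomorphism with domain the (distinct) elements enumerated by `a`:
the map `a i ↦ f i` is well-defined, injective, and preserves all relations. -/
def IsPartialIso (L : Language) {U : Type*} [L.Structure U] {n : ℕ}
    (a f : Fin n → U) : Prop :=
  Function.Injective f ∧
    ∀ (k : ℕ) (R : L.Relations k) (t : Fin k → Fin n),
      Language.Structure.RelMap R (a ∘ t) ↔ Language.Structure.RelMap R (f ∘ t)

/-!
By the pigeonhole property, the extension set `T` or its complement is the range of a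
self-embedding `h`. The complement is impossible: it would contain the image of `f`, which
then pulls back along `h` to a partial isomorphism `aᵢ ↦ cᵢ`; ultrahomogeneity extends this
to an automorphism `σ`, and `h (σ b)` lies in `range h = Tᶜ`, yet `aᵢ ↦ f i, b ↦ h (σ b)` is
the restriction of the embedding `h ∘ σ`, so `h (σ b) ∈ T`.
-/

section

open Language Structure Substructure

def extensionSet (L : Language) {U : Type*} [L.Structure U] {n : ℕ} (a : Fin n → U) (b : U)
    (f : Fin n → U) : Set U :=
  {x | x ∉ Set.range f ∧ IsPartialIso L (Fin.snoc a b) (Fin.snoc f x)}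

variable {L : Language} {U : Type*} [L.Structure U] {n : ℕ}

theorem isPartialIso_self {a : Fin n → U} (ha : Function.Injective a) : IsPartialIso L a a :=
  ⟨ha, fun _ _ _ => Iff.rfl⟩

theorem isPartialIso_embedding_comp_iff (e : U ↪[L] U) {a f : Fin n → U} :
    IsPartialIso L a (e ∘ f) ↔ IsPartialIso L a f := by
  refine and_congr (e.injective.of_comp_iff f) (forall₃_congr fun k R t => ?_)
  rw [Function.comp_assoc, e.map_rel]

theorem IsPartialIso.exists_embedding_closure [L.IsRelational] {a f : Fin n → U}
    (ha : Function.Injective a) (hf : IsPartialIso L a f) :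
    ∃ e : closure L (Set.range a) ↪[L] U, ∀ i, e ⟨a i, subset_closure ⟨i, rfl⟩⟩ = f i := by
  let idx : closure L (Set.range a) → Fin n := fun x =>
    (Equiv.ofInjective a ha).symm ⟨x, (mem_closure_iff_of_isRelational L _ _).1 x.2⟩
  have a_idx : ∀ x, a (idx x) = x := fun x => Equiv.apply_ofInjective_symm ha _
  refine ⟨⟨⟨f ∘ idx, fun x y hxy => Subtype.ext ?_⟩, fun g => isEmptyElim g, fun R t => ?_⟩,
    fun i => congrArg f (Equiv.ofInjective_symm_apply ha i)⟩
  · rw [← a_idx x, ← a_idx y, hf.1 hxy]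
  · have : a ∘ idx ∘ t = Subtype.val ∘ t := funext fun j => a_idx (t j)
    rw [Function.comp_assoc, ← hf.2 _ R, this]
    exact (closure L (Set.range a)).subtype.map_rel R t

theorem FirstOrder.Language.IsUltrahomogeneous.exists_equiv_of_isPartialIso [L.IsRelational]
    (hU : L.IsUltrahomogeneous U) {a f : Fin n → U} (ha : Function.Injective a)
    (hf : IsPartialIso L a f) : ∃ σ : U ≃[L] U, σ ∘ a = f := by
  obtain ⟨e, he⟩ := hf.exists_embedding_closure ha
  obtain ⟨σ, rfl⟩ := hU _ (fg_closure (Set.finite_range a)) e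
  exact ⟨σ, funext he⟩

theorem range_ne_compl_extensionSet [L.IsRelational] (hU : L.IsUltrahomogeneous U)
    {a f : Fin n → U} {b : U} (hab : Function.Injective (Fin.snoc a b : Fin (n + 1) → U))
    (hf : IsPartialIso L a f) (h : U ↪[L] U) :
    Set.range h ≠ (extensionSet L a b f)ᶜ := by
  intro hh
  have f_mem : ∀ i, f i ∈ Set.range h := fun i => hh ▸ fun hx => hx.1 ⟨i, rfl⟩
  choose c hc using f_mem
  have hcf : h ∘ c = f := funext hc
  obtain ⟨σ, hσ⟩ := hU.exists_equiv_of_isPartialIso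
    (Fin.snoc_injective_iff.1 hab).1 ((isPartialIso_embedding_comp_iff h).1 (hcf ▸ hf))
  have hx_snoc : Fin.snoc f (h (σ b)) = h.comp σ.toEmbedding ∘ Fin.snoc a b := by
    rw [Fin.comp_snoc, ← hcf, ← hσ]
    rfl
  have hx : IsPartialIso L (Fin.snoc a b) (Fin.snoc f (h (σ b))) :=
    hx_snoc ▸ (isPartialIso_embedding_comp_iff _).2 (isPartialIso_self hab)
  have hx_compl : h (σ b) ∈ (extensionSet L a b f)ᶜ := hh ▸ Set.mem_range_self (σ b)
  exact hx_compl ⟨(Fin.snoc_injective_iff.1 hx.1).2, hx⟩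

end

theorem extension_set_isomorphic_to_U_general {L : Language} [L.IsRelational]
    {U : Type*} [L.Structure U] [Infinite U]
    (hU : L.IsUltrahomogeneous U) (hP : HasPigeonhole L U)
    {n : ℕ} (a : Fin n → U) (b : U)
    (hab : Function.Injective (Fin.snoc a b : Fin (n + 1) → U))
    (f : Fin n → U) (hf : IsPartialIso L a f) :
    (∃ h : U ↪[L] U, Set.range h =
        {x : U | x ∉ Set.range f ∧
          IsPartialIso L (Fin.snoc a b) (Fin.snoc f x)}) ∧
      {x : U | x ∉ Set.range f ∧
        IsPartialIso L (Fin.snoc a b) (Fin.snoc f x)}.Infinite := by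
  obtain ⟨h, hh⟩ : ∃ h : U ↪[L] U, Set.range h = extensionSet L a b f :=
    (hP _).resolve_right fun ⟨h, hh⟩ => range_ne_compl_extensionSet hU hab hf h hh
  have hT : (extensionSet L a b f).Infinite := hh ▸ Set.infinite_range_of_injective h.injective
  exact ⟨⟨h, hh⟩, hT⟩

theorem extension_set_isomorphic_to_U {L : Language} [L.IsRelational]
    {U : Type*} [L.Structure U] [Countable U] [Infinite U]
    (hU : L.IsUltrahomogeneous U) (hP : HasPigeonhole L U)
    {n : ℕ} (a : Fin n → U) (b : U)
    (hab : Function.Injective (Fin.snoc a b : Fin (n + 1) → U))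
    (f : Fin n → U) (hf : IsPartialIso L a f) :
    (∃ h : U ↪[L] U, Set.range h =
        {x : U | x ∉ Set.range f ∧
          IsPartialIso L (Fin.snoc a b) (Fin.snoc f x)}) ∧
      {x : U | x ∉ Set.range f ∧
        IsPartialIso L (Fin.snoc a b) (Fin.snoc f x)}.Infinite :=
  extension_set_isomorphic_to_U_general hU hP a b hab f hf
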